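/- arXiv:1709.08765 — 7 statements merged into one kernel-verified Lean document; each statement's English description precedes it below -/
import Mathlib

section
/- If W is an n×n row-stochastic matrix all of whose entries are at least β > 0, and v = W u for vectors u, v ∈ ℝⁿ, then max_i v_i − min_i v_i ≤ (1 − 2β)(max_i u_i − min_i u_i). -/
/-!
Every entry of `W u` is a convex combination of the entries of `u` that puts weight at least `β`
on a minimal entry of `u` and weight at least `β` on a maximal one. Hence all entries of `W u`
lie in the interval `[min u + β (max u - min u), max u - β (max u - min u)]`, whose length is
`(1 - 2β)` times the spread of `u`.
-/

open Finset Matrix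

section ConvexCombination

variable {ι : Type*} [Fintype ι] {w u : ι → ℝ} {β : ℝ}

theorem dotProduct_le_sub_mul_of_le (hw : ∀ j, 0 ≤ w j) (hsum : ∑ j, w j = 1) {M : ℝ}
    (hu : ∀ j, u j ≤ M) (j₀ : ι) (hβ : β ≤ w j₀) : w ⬝ᵥ u ≤ M - β * (M - u j₀) :=
  have hgap : w j₀ * (M - u j₀) ≤ ∑ j, w j * (M - u j) :=
    single_le_sum (fun j _ => mul_nonneg (hw j) (sub_nonneg.2 (hu j))) (mem_univ j₀)
  have hsplit : ∑ j, w j * (M - u j) = M - w ⬝ᵥ u := by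
    simp only [mul_sub, sum_sub_distrib, ← sum_mul, hsum, one_mul, dotProduct]
  calc w ⬝ᵥ u = M - ∑ j, w j * (M - u j) := by rw [hsplit, sub_sub_cancel]
    _ ≤ M - w j₀ * (M - u j₀) := by gcongr
    _ ≤ M - β * (M - u j₀) := by gcongr; linarith [hu j₀]

theorem add_mul_le_dotProduct_of_le (hw : ∀ j, 0 ≤ w j) (hsum : ∑ j, w j = 1) {m : ℝ}
    (hu : ∀ j, m ≤ u j) (j₀ : ι) (hβ : β ≤ w j₀) : m + β * (u j₀ - m) ≤ w ⬝ᵥ u := by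
  have := dotProduct_le_sub_mul_of_le (u := -u) (M := -m) hw hsum (fun j => neg_le_neg (hu j))
    j₀ hβ
  simp only [dotProduct_neg, Pi.neg_apply] at this
  linarith

end ConvexCombination

theorem Matrix.sup'_sub_inf'_mulVec_le {κ ι : Type*} [Fintype κ] [Fintype ι]
    (hκ : (univ : Finset κ).Nonempty) (hι : (univ : Finset ι).Nonempty)
    (W : Matrix κ ι ℝ) {β : ℝ} (hnonneg : ∀ i j, 0 ≤ W i j) (hrow : ∀ i, ∑ j, W i j = 1)
    (hentry : ∀ i j, β ≤ W i j) (u : ι → ℝ) :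
    univ.sup' hκ (W *ᵥ u) - univ.inf' hκ (W *ᵥ u)
      ≤ (1 - 2 * β) * (univ.sup' hι u - univ.inf' hι u) := by
  obtain ⟨jmax, -, hjmax⟩ := exists_mem_eq_sup' hι u
  obtain ⟨jmin, -, hjmin⟩ := exists_mem_eq_inf' hι u
  set M := univ.sup' hι u
  set m := univ.inf' hι u
  have hupper : univ.sup' hκ (W *ᵥ u) ≤ M - β * (M - m) :=
    sup'_le _ _ fun i _ => hjmin ▸ dotProduct_le_sub_mul_of_le (hnonneg i) (hrow i)
      (fun j => le_sup' u (mem_univ j)) jmin (hentry i jmin)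
  have hlower : m + β * (M - m) ≤ univ.inf' hκ (W *ᵥ u) :=
    le_inf' _ _ fun i _ => hjmax ▸ add_mul_le_dotProduct_of_le (hnonneg i) (hrow i)
      (fun j => inf'_le u (mem_univ j)) jmax (hentry i jmax)
  linarith

theorem spread_contraction_general (n : ℕ) (hn : 0 < n) (W : Matrix (Fin n) (Fin n) ℝ)
    (β : ℝ)
    (hnonneg : ∀ i j, 0 ≤ W i j)
    (hrow : ∀ i, ∑ j, W i j = 1)
    (hentry : ∀ i j, β ≤ W i j)
    (u v : Fin n → ℝ) (hv : v = W.mulVec u) :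
    Finset.univ.sup' ⟨⟨0, hn⟩, Finset.mem_univ _⟩ v
      - Finset.univ.inf' ⟨⟨0, hn⟩, Finset.mem_univ _⟩ v
    ≤ (1 - 2 * β) *
      (Finset.univ.sup' ⟨⟨0, hn⟩, Finset.mem_univ _⟩ u
        - Finset.univ.inf' ⟨⟨0, hn⟩, Finset.mem_univ _⟩ u) := by
  subst hv
  exact W.sup'_sub_inf'_mulVec_le _ _ hnonneg hrow hentry u

theorem spread_contraction (n : ℕ) (hn : 0 < n) (W : Matrix (Fin n) (Fin n) ℝ)
    (β : ℝ) (hβ : 0 < β)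
    (hnonneg : ∀ i j, 0 ≤ W i j)
    (hrow : ∀ i, ∑ j, W i j = 1)
    (hentry : ∀ i j, β ≤ W i j)
    (u v : Fin n → ℝ) (hv : v = W.mulVec u) :
    Finset.univ.sup' ⟨⟨0, hn⟩, Finset.mem_univ _⟩ v
      - Finset.univ.inf' ⟨⟨0, hn⟩, Finset.mem_univ _⟩ v
    ≤ (1 - 2 * β) *
      (Finset.univ.sup' ⟨⟨0, hn⟩, Finset.mem_univ _⟩ u
        - Finset.univ.inf' ⟨⟨0, hn⟩, Finset.mem_univ _⟩ u) :=
  spread_contraction_general n hn W β hnonneg hrow hentry u v hv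
end

section
/- Let A⁰, A¹, A², … be row-stochastic n×n matrices such that each matrix has all diagonal entries positive, every positive entry is at least α > 0, and the directed graph associated with each Aᵏ is strongly connected. Then every entry of the product A^{n-1} A^{n-2} ⋯ A⁰ is at least α^n. -/
/-!
Fix a column `j` and let `S m` be the set of rows `x` with `0 < matProd A m x j`. Since the diagonals
are positive, `S m ⊆ S (m + 1)`; since `G_{A m}` is strongly connected, some edge of it leaves `S m`
unless `S m` is everything, and its tail joins `S (m + 1)`. So `S m` grows by a row at every step
from `S 0 = {j}` and contains every row after `n - 1` steps. A positive entry of a product of `m`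
matrices whose positive entries are at least `α` is at least `α ^ m`.
-/

/-- `matProd A k = A^{k-1} * A^{k-2} * ⋯ * A^0`. -/
def matProd {n : ℕ} (A : ℕ → Matrix (Fin n) (Fin n) ℝ) : ℕ → Matrix (Fin n) (Fin n) ℝ
  | 0 => 1
  | k + 1 => A k * matProd A k

open Finset

lemma Relation.ReflTransGen.exists_edge_leaving {β : Type*} {R : β → β → Prop} {S : Set β}
    {a b : β} (h : Relation.ReflTransGen R a b) (ha : a ∈ S) (hb : b ∉ S) :
    ∃ x ∈ S, ∃ y ∉ S, R x y := by
  induction h with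
  | refl => exact absurd ha hb
  | @tail c d _ hcd ih =>
    by_cases hc : c ∈ S
    · exact ⟨c, hc, d, hb, hcd⟩
    · exact ih hc

section GrowingChain

variable {β : Type*} [Fintype β] {S : ℕ → Finset β}

lemma Finset.min_succ_le_card_of_ssubset_succ (h0 : (S 0).Nonempty)
    (hmono : ∀ m, S m ⊆ S (m + 1)) (hgrow : ∀ m, S m ≠ univ → S m ⊂ S (m + 1)) (m : ℕ) :
    min (m + 1) (Fintype.card β) ≤ #(S m) := by
  induction m with
  | zero => exact (min_le_left _ _).trans (card_pos.2 h0)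
  | succ m ih =>
    by_cases hfull : S m = univ
    · have hfull' : S (m + 1) = univ := eq_univ_of_forall fun x => hmono m (hfull ▸ mem_univ x)
      rw [hfull', card_univ]
      exact min_le_right _ _
    · have hlt := card_lt_card (hgrow m hfull)
      have hle := card_le_univ (S (m + 1))
      omega

lemma Finset.eq_univ_of_ssubset_succ (h0 : (S 0).Nonempty)
    (hmono : ∀ m, S m ⊆ S (m + 1)) (hgrow : ∀ m, S m ≠ univ → S m ⊂ S (m + 1)) {m : ℕ}
    (hm : Fintype.card β ≤ m + 1) : S m = univ := by
  refine eq_univ_of_card _ (le_antisymm (card_le_univ _) ?_)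
  simpa [hm] using min_succ_le_card_of_ssubset_succ h0 hmono hgrow m

end GrowingChain

section MatProd

variable {n : ℕ} {A : ℕ → Matrix (Fin n) (Fin n) ℝ}

lemma matProd_succ_apply (m : ℕ) (i j : Fin n) :
    matProd A (m + 1) i j = ∑ k, A m i k * matProd A m k j :=
  Matrix.mul_apply

lemma matProd_nonneg (hnonneg : ∀ k i j, 0 ≤ A k i j) (m : ℕ) (i j : Fin n) :
    0 ≤ matProd A m i j := by
  induction m generalizing i with
  | zero => by_cases hij : i = j <;> simp [matProd, Matrix.one_apply, hij]
  | succ m ih =>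
    rw [matProd_succ_apply]
    exact sum_nonneg fun k _ => mul_nonneg (hnonneg m i k) (ih k)

lemma mul_matProd_le_matProd_succ (hnonneg : ∀ k i j, 0 ≤ A k i j) (m : ℕ) (i k j : Fin n) :
    A m i k * matProd A m k j ≤ matProd A (m + 1) i j := by
  rw [matProd_succ_apply]
  exact single_le_sum (fun l _ => mul_nonneg (hnonneg m i l) (matProd_nonneg hnonneg m l j))
    (mem_univ k)

lemma matProd_succ_pos (hnonneg : ∀ k i j, 0 ≤ A k i j) {m : ℕ} {i k j : Fin n}
    (hA : 0 < A m i k) (hP : 0 < matProd A m k j) : 0 < matProd A (m + 1) i j :=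
  (mul_pos hA hP).trans_le (mul_matProd_le_matProd_succ hnonneg m i k j)

lemma pow_le_matProd_of_pos {α : ℝ} (hα : 0 ≤ α) (hnonneg : ∀ k i j, 0 ≤ A k i j)
    (hentry : ∀ k i j, 0 < A k i j → α ≤ A k i j) (m : ℕ) (i j : Fin n)
    (hpos : 0 < matProd A m i j) : α ^ m ≤ matProd A m i j := by
  induction m generalizing i with
  | zero => by_cases hij : i = j <;> simp_all [matProd, Matrix.one_apply]
  | succ m ih =>
    rw [matProd_succ_apply] at hpos
    obtain ⟨k, -, hk⟩ := (sum_pos_iff_of_nonneg fun l _ =>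
      mul_nonneg (hnonneg m i l) (matProd_nonneg hnonneg m l j)).1 hpos
    have hA : 0 < A m i k := pos_of_mul_pos_left hk (matProd_nonneg hnonneg m k j)
    have hP : 0 < matProd A m k j := pos_of_mul_pos_right hk (hnonneg m i k)
    calc α ^ (m + 1) = α * α ^ m := pow_succ' α m
      _ ≤ A m i k * matProd A m k j :=
        mul_le_mul (hentry m i k hA) (ih k hP) (pow_nonneg hα m) hA.le
      _ ≤ matProd A (m + 1) i j := mul_matProd_le_matProd_succ hnonneg m i k j

end MatProd

theorem product_positive_general (n : ℕ) (A : ℕ → Matrix (Fin n) (Fin n) ℝ)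
    (α : ℝ) (hα : 0 < α)
    (hnonneg : ∀ k i j, 0 ≤ A k i j)
    (hdiag : ∀ k i, 0 < A k i i)
    (hentry : ∀ k i j, 0 < A k i j → α ≤ A k i j)
    (hconn : ∀ k i j, Relation.ReflTransGen (fun a b => 0 < A k b a) i j) :
    ∀ i j, α ^ n ≤ matProd A n i j := by
  intro i j
  let S : ℕ → Finset (Fin n) := fun m => univ.filter (0 < matProd A m · j)
  have hS : ∀ m x, x ∈ S m ↔ 0 < matProd A m x j := fun m x => by simp [S]
  have hj : j ∈ S 0 := (hS 0 j).2 (by rw [matProd, Matrix.one_apply_eq]; exact one_pos)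
  have hmono : ∀ m, S m ⊆ S (m + 1) := fun m x hx =>
    (hS _ x).2 (matProd_succ_pos hnonneg (hdiag m x) ((hS m x).1 hx))
  have hgrow : ∀ m, S m ≠ univ → S m ⊂ S (m + 1) := fun m hfull => by
    obtain ⟨b, -, hb⟩ := exists_of_ssubset (ssubset_univ_iff.2 hfull)
    have hjm : j ∈ S m := monotone_nat_of_le_succ hmono (Nat.zero_le m) hj
    obtain ⟨x, hx, y, hy, hyx⟩ := (hconn m j b).exists_edge_leaving (S := ↑(S m)) hjm hb
    exact (ssubset_iff_of_subset (hmono m)).2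
      ⟨y, (hS _ y).2 (matProd_succ_pos hnonneg hyx ((hS m x).1 hx)), hy⟩
  have hfull : S n = univ := eq_univ_of_ssubset_succ ⟨j, hj⟩ hmono hgrow (by simp)
  exact pow_le_matProd_of_pos hα.le hnonneg hentry n i j ((hS n i).1 (hfull ▸ mem_univ i))

theorem product_positive (n : ℕ) (hn : 0 < n) (A : ℕ → Matrix (Fin n) (Fin n) ℝ)
    (α : ℝ) (hα : 0 < α)
    (hnonneg : ∀ k i j, 0 ≤ A k i j)
    (hrow : ∀ k i, ∑ j, A k i j = 1)
    (hdiag : ∀ k i, 0 < A k i i)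
    (hentry : ∀ k i j, 0 < A k i j → α ≤ A k i j)
    (hconn : ∀ k i j, Relation.ReflTransGen (fun a b => 0 < A k b a) i j) :
    ∀ i j, α ^ n ≤ matProd A n i j :=
  product_positive_general n A α hα hnonneg hdiag hentry hconn
end

section
/- Let (Aᵏ) be a sequence of row-stochastic n×n matrices and suppose there exist β > 0 and a positive integer m such that for every l ≥ 0 every entry of the product A^{(l+1)m−1} ⋯ A^{lm} is at least β. Let x^{k+1} = Aᵏ xᵏ with x⁰ ∈ ℝⁿ given. Then the spread of xᵏ converges to 0 geometrically: for all l, spread(x^{lm}) ≤ (1 − 2β)^l · spread(x⁰). -/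
/-- `blockProd A s len = A^{s+len-1} * ⋯ * A^s`. -/
def blockProd {n : ℕ} (A : ℕ → Matrix (Fin n) (Fin n) ℝ) (s len : ℕ) :
    Matrix (Fin n) (Fin n) ℝ :=
  matProd (fun t => A (s + t)) len

open Finset Matrix

section Spread

variable {ι : Type*} [Fintype ι]

def spread [Nonempty ι] (v : ι → ℝ) : ℝ :=
  univ.sup' univ_nonempty v - univ.inf' univ_nonempty v

theorem spread_eq_zero_of_subsingleton [Nonempty ι] [Subsingleton ι] (v : ι → ℝ) :
    spread v = 0 := by
  obtain ⟨i, -, hi⟩ := exists_mem_eq_sup' univ_nonempty v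
  obtain ⟨j, -, hj⟩ := exists_mem_eq_inf' univ_nonempty v
  rw [spread, hi, hj, Subsingleton.elim i j, sub_self]

theorem two_mul_le_one_of_forall_le [Nontrivial ι] {w : ι → ℝ} {β : ℝ} (hβ : 0 ≤ β)
    (hw : ∀ j, β ≤ w j) (hsum : ∑ j, w j = 1) : 2 * β ≤ 1 := by
  obtain ⟨j, j', hjj'⟩ := exists_pair_ne ι
  have := add_le_sum (fun k _ => hβ.trans (hw k)) (mem_univ j) (mem_univ j') hjj'
  linarith [hw j, hw j']

theorem dotProduct_le_of_forall_le {w v : ι → ℝ} {β M : ℝ} {j₀ : ι} (hw : ∀ j, 0 ≤ w j)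
    (hsum : ∑ j, w j = 1) (hj₀ : β ≤ w j₀) (hv : ∀ j, v j ≤ M) :
    w ⬝ᵥ v ≤ β * v j₀ + (1 - β) * M := by
  have hgap : w j₀ * (M - v j₀) ≤ ∑ j, w j * (M - v j) :=
    single_le_sum (f := fun j => w j * (M - v j))
      (fun j _ => mul_nonneg (hw j) (sub_nonneg.2 (hv j))) (mem_univ j₀)
  have hsplit : w ⬝ᵥ v = M - ∑ j, w j * (M - v j) := by
    simp only [dotProduct, mul_sub, sum_sub_distrib, ← sum_mul, hsum, one_mul, sub_sub_cancel]
  rw [hsplit]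
  nlinarith [hv j₀]

theorem spread_mulVec_le [Nonempty ι] {B : Matrix ι ι ℝ} {β : ℝ} (hβ : 0 ≤ β)
    (hB : ∀ i j, β ≤ B i j) (hrow : ∀ i, ∑ j, B i j = 1) (v : ι → ℝ) :
    spread (B *ᵥ v) ≤ (1 - 2 * β) * spread v := by
  obtain ⟨jmax, -, hjmax⟩ := exists_mem_eq_sup' univ_nonempty v
  obtain ⟨jmin, -, hjmin⟩ := exists_mem_eq_inf' univ_nonempty v
  set M := univ.sup' univ_nonempty v
  set μ := univ.inf' univ_nonempty v
  have hBnonneg : ∀ i j, 0 ≤ B i j := fun i j => hβ.trans (hB i j)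
  have hupper : ∀ i, (B *ᵥ v) i ≤ β * μ + (1 - β) * M := fun i => by
    rw [hjmin]
    exact dotProduct_le_of_forall_le (hBnonneg i) (hrow i) (hB i jmin)
      fun j => le_sup' v (mem_univ j)
  have hlower : ∀ i, β * M + (1 - β) * μ ≤ (B *ᵥ v) i := fun i => by
    have := dotProduct_le_of_forall_le (v := -v) (M := -μ) (hBnonneg i) (hrow i) (hB i jmax)
      fun j => neg_le_neg (inf'_le v (mem_univ j))
    rw [dotProduct_neg, Pi.neg_apply, ← hjmax] at this
    change _ ≤ B i ⬝ᵥ v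
    linarith
  have hsup := sup'_le univ_nonempty (B *ᵥ v) fun i _ => hupper i
  have hinf := le_inf' univ_nonempty (B *ᵥ v) fun i _ => hlower i
  rw [spread, spread]
  linarith

end Spread

section Products

variable {n : ℕ}

theorem matProd_mulVec_one {A : ℕ → Matrix (Fin n) (Fin n) ℝ} (hA : ∀ k, A k *ᵥ 1 = 1) (k : ℕ) :
    matProd A k *ᵥ 1 = 1 := by
  induction k with
  | zero => exact one_mulVec 1
  | succ k ih => rw [matProd, ← mulVec_mulVec, ih, hA]

theorem sum_blockProd_apply {A : ℕ → Matrix (Fin n) (Fin n) ℝ} (hrow : ∀ k i, ∑ j, A k i j = 1)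
    (s len : ℕ) (i : Fin n) : ∑ j, blockProd A s len i j = 1 := by
  have hA : ∀ k, A (s + k) *ᵥ 1 = 1 := fun k => funext fun i => by
    simpa [mulVec, dotProduct] using hrow (s + k) i
  simpa [blockProd, mulVec, dotProduct] using congrFun (matProd_mulVec_one hA len) i

theorem eq_blockProd_mulVec {A : ℕ → Matrix (Fin n) (Fin n) ℝ} {x : ℕ → Fin n → ℝ}
    (hx : ∀ k, x (k + 1) = A k *ᵥ x k) (s len : ℕ) :
    x (s + len) = blockProd A s len *ᵥ x s := by
  induction len with
  | zero => exact (one_mulVec _).symm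
  | succ len ih =>
    rw [← add_assoc, hx, ih, mulVec_mulVec]
    rfl

end Products

theorem geometric_spread_decay_general (n : ℕ) (hn : 0 < n)
    (A : ℕ → Matrix (Fin n) (Fin n) ℝ)
    (hrow : ∀ k i, ∑ j, A k i j = 1)
    (β : ℝ) (hβ : 0 < β) (m : ℕ)
    (hblock : ∀ l i j, β ≤ blockProd A (l * m) m i j)
    (x : ℕ → Fin n → ℝ)
    (hx : ∀ k, x (k + 1) = (A k).mulVec (x k)) :
    ∀ l : ℕ,
      Finset.univ.sup' ⟨⟨0, hn⟩, Finset.mem_univ _⟩ (x (l * m))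
        - Finset.univ.inf' ⟨⟨0, hn⟩, Finset.mem_univ _⟩ (x (l * m))
      ≤ (1 - 2 * β) ^ l *
        (Finset.univ.sup' ⟨⟨0, hn⟩, Finset.mem_univ _⟩ (x 0)
          - Finset.univ.inf' ⟨⟨0, hn⟩, Finset.mem_univ _⟩ (x 0)) := by
  intro l
  have : Nonempty (Fin n) := ⟨⟨0, hn⟩⟩
  change spread (x (l * m)) ≤ (1 - 2 * β) ^ l * spread (x 0)
  -- with a single coordinate `1 - 2 * β` may be negative, but every spread vanishes
  rcases subsingleton_or_nontrivial (Fin n) with _ | _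
  · simp only [spread_eq_zero_of_subsingleton, mul_zero, le_refl]
  have h2β : 2 * β ≤ 1 :=
    two_mul_le_one_of_forall_le hβ.le (hblock 0 ⟨0, hn⟩) (sum_blockProd_apply hrow _ _ _)
  have hstep : ∀ k, spread (x ((k + 1) * m)) ≤ (1 - 2 * β) * spread (x (k * m)) := fun k => by
    rw [add_one_mul, eq_blockProd_mulVec hx]
    exact spread_mulVec_le hβ.le (hblock k) (sum_blockProd_apply hrow _ _) _
  simpa using le_geom (u := fun l => spread (x (l * m))) (by linarith : 0 ≤ 1 - 2 * β) l
    fun k _ => hstep k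

theorem geometric_spread_decay (n : ℕ) (hn : 0 < n)
    (A : ℕ → Matrix (Fin n) (Fin n) ℝ)
    (hnonneg : ∀ k i j, 0 ≤ A k i j)
    (hrow : ∀ k i, ∑ j, A k i j = 1)
    (β : ℝ) (hβ : 0 < β) (m : ℕ) (hm : 0 < m)
    (hblock : ∀ l i j, β ≤ blockProd A (l * m) m i j)
    (x : ℕ → Fin n → ℝ)
    (hx : ∀ k, x (k + 1) = (A k).mulVec (x k)) :
    ∀ l : ℕ,
      Finset.univ.sup' ⟨⟨0, hn⟩, Finset.mem_univ _⟩ (x (l * m))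
        - Finset.univ.inf' ⟨⟨0, hn⟩, Finset.mem_univ _⟩ (x (l * m))
      ≤ (1 - 2 * β) ^ l *
        (Finset.univ.sup' ⟨⟨0, hn⟩, Finset.mem_univ _⟩ (x 0)
          - Finset.univ.inf' ⟨⟨0, hn⟩, Finset.mem_univ _⟩ (x 0)) :=
  geometric_spread_decay_general n hn A hrow β hβ m hblock x hx
end

section
/- Suppose x^{k+1} = Aᵏ xᵏ + Δᵏ where each Aᵏ is an n×n doubly stochastic matrix satisfying σ₂(Aᵏ) ≤ λ < 1 for all k, and the perturbations satisfy ‖Δᵏ‖₂ ≤ L′ for all k. Let e^k = x^k − ((𝟏ᵀx^k)/n)𝟏 denote the deviation from the mean. Then for all k, ‖e^k‖₂ ≤ λ^k‖e⁰‖₂ + L′/(1−λ). -/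
/-!
Let `e` denote the deviation of a vector from its mean. Since `A` is doubly stochastic, the
deviation commutes with `A`, so `e(x^{k+1}) = A e(x^k) + e(Δ^k)`. As `e(x^k)` is orthogonal
to `𝟏`, the first term has norm at most `λ ‖e(x^k)‖`, and the second at most `‖Δ^k‖ ≤ L'`
because mean removal is an orthogonal projection. Unrolling `a_{k+1} ≤ λ a_k + L'` gives the
bound, the geometric series of the perturbations being at most `L' / (1 - λ)`.
-/

/-- Euclidean norm of a vector in ℝⁿ. -/
noncomputable def l2norm {n : ℕ} (v : Fin n → ℝ) : ℝ := Real.sqrt (∑ i, v i ^ 2)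

/-- The second-largest singular value of a doubly stochastic matrix: the operator norm of
`A` restricted to the subspace orthogonal to the all-ones vector. -/
noncomputable def sigma2 {n : ℕ} (A : Matrix (Fin n) (Fin n) ℝ) : ℝ :=
  sSup {r | ∃ y : Fin n → ℝ, (∑ i, y i = 0) ∧ l2norm y = 1 ∧ r = l2norm (A.mulVec y)}

open Matrix

section L2Norm

variable {n : ℕ}

lemma l2norm_eq_norm_toLp (v : Fin n → ℝ) : l2norm v = ‖WithLp.toLp 2 v‖ := by
  simp [l2norm, EuclideanSpace.norm_eq]

lemma l2norm_nonneg (v : Fin n → ℝ) : 0 ≤ l2norm v := Real.sqrt_nonneg _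

lemma l2norm_add_le (v w : Fin n → ℝ) : l2norm (v + w) ≤ l2norm v + l2norm w := by
  simpa only [l2norm_eq_norm_toLp, WithLp.toLp_add] using norm_add_le _ _

lemma l2norm_smul (c : ℝ) (v : Fin n → ℝ) : l2norm (c • v) = |c| * l2norm v := by
  rw [l2norm_eq_norm_toLp, l2norm_eq_norm_toLp, WithLp.toLp_smul, norm_smul, Real.norm_eq_abs]

lemma l2norm_mulVec_le (A : Matrix (Fin n) (Fin n) ℝ) (v : Fin n → ℝ) :
    l2norm (A *ᵥ v) ≤ ‖toEuclideanCLM (𝕜 := ℝ) A‖ * l2norm v := by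
  simpa only [l2norm_eq_norm_toLp, toEuclideanCLM_toLp] using
    (toEuclideanCLM (𝕜 := ℝ) A).le_opNorm (WithLp.toLp 2 v)

lemma l2norm_mulVec_le_sigma2_mul (A : Matrix (Fin n) (Fin n) ℝ) {y : Fin n → ℝ}
    (hy : ∑ i, y i = 0) : l2norm (A *ᵥ y) ≤ sigma2 A * l2norm y := by
  rcases (l2norm_nonneg y).eq_or_lt with hc | hc
  · simpa [← hc] using l2norm_mulVec_le A y
  set c := l2norm y
  have hbdd : BddAbove
      {r | ∃ y : Fin n → ℝ, (∑ i, y i = 0) ∧ l2norm y = 1 ∧ r = l2norm (A *ᵥ y)} := by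
    refine ⟨‖toEuclideanCLM (𝕜 := ℝ) A‖, ?_⟩
    rintro r ⟨z, -, hz, rfl⟩
    simpa [hz] using l2norm_mulVec_le A z
  have hunit_sum : ∑ i, (c⁻¹ • y) i = 0 := by
    simp only [Pi.smul_apply, smul_eq_mul, ← Finset.mul_sum, hy, mul_zero]
  have hunit_norm : l2norm (c⁻¹ • y) = 1 := by
    rw [l2norm_smul, abs_of_pos (inv_pos.2 hc), inv_mul_cancel₀ hc.ne']
  have hunit : l2norm (A *ᵥ (c⁻¹ • y)) ≤ sigma2 A :=
    le_csSup hbdd ⟨_, hunit_sum, hunit_norm, rfl⟩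
  have hy_eq : y = c • c⁻¹ • y := by rw [smul_smul, mul_inv_cancel₀ hc.ne', one_smul]
  rw [hy_eq, mulVec_smul, l2norm_smul, abs_of_pos hc, mul_comm (sigma2 A)]
  exact mul_le_mul_of_nonneg_left hunit hc.le

end L2Norm

section Deviation

variable {n : ℕ}

noncomputable def deviation (v : Fin n → ℝ) : Fin n → ℝ := v - fun _ => (∑ i, v i) / n

lemma deviation_add (v w : Fin n → ℝ) : deviation (v + w) = deviation v + deviation w := by
  funext i
  simp only [deviation, Pi.add_apply, Pi.sub_apply, Finset.sum_add_distrib]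
  ring

lemma sum_deviation (v : Fin n → ℝ) : ∑ i, deviation v i = 0 := by
  rcases n.eq_zero_or_pos with rfl | hn
  · simp
  simp only [deviation, Pi.sub_apply, Finset.sum_sub_distrib, Finset.sum_const,
    Finset.card_univ, Fintype.card_fin, nsmul_eq_mul]
  rw [mul_div_cancel₀ _ (Nat.cast_ne_zero.2 hn.ne'), sub_self]

lemma l2norm_deviation_le (v : Fin n → ℝ) : l2norm (deviation v) ≤ l2norm v := by
  set m := (∑ i, v i) / n
  -- `v = deviation v + m 𝟏` is an orthogonal decomposition
  have hsplit : ∀ i, v i ^ 2 = deviation v i ^ 2 + 2 * m * deviation v i + m ^ 2 := by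
    intro i
    simp only [deviation, Pi.sub_apply]
    ring
  refine Real.sqrt_le_sqrt ?_
  calc ∑ i, deviation v i ^ 2
      ≤ ∑ i, deviation v i ^ 2 + 2 * m * ∑ i, deviation v i + ∑ _i : Fin n, m ^ 2 := by
        rw [sum_deviation, mul_zero, add_zero, le_add_iff_nonneg_right]
        positivity
    _ = ∑ i, v i ^ 2 := by
        simp only [hsplit, Finset.sum_add_distrib, Finset.mul_sum]

lemma sum_mulVec_of_col_sum_eq_one {A : Matrix (Fin n) (Fin n) ℝ}
    (hcol : ∀ j, ∑ i, A i j = 1) (v : Fin n → ℝ) : ∑ i, (A *ᵥ v) i = ∑ j, v j := by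
  simp only [mulVec, dotProduct]
  rw [Finset.sum_comm]
  simp only [← Finset.sum_mul, hcol, one_mul]

lemma deviation_mulVec {A : Matrix (Fin n) (Fin n) ℝ} (hrow : ∀ i, ∑ j, A i j = 1)
    (hcol : ∀ j, ∑ i, A i j = 1) (v : Fin n → ℝ) :
    deviation (A *ᵥ v) = A *ᵥ deviation v := by
  rw [deviation, deviation, sum_mulVec_of_col_sum_eq_one hcol]
  funext i
  simp only [Pi.sub_apply, mulVec, dotProduct,
    mul_sub, Finset.sum_sub_distrib, ← Finset.sum_mul, hrow, one_mul]

lemma l2norm_deviation_mulVec_add_le {A : Matrix (Fin n) (Fin n) ℝ}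
    (hrow : ∀ i, ∑ j, A i j = 1) (hcol : ∀ j, ∑ i, A i j = 1) (v d : Fin n → ℝ) :
    l2norm (deviation (A *ᵥ v + d)) ≤ sigma2 A * l2norm (deviation v) + l2norm d := by
  rw [deviation_add, deviation_mulVec hrow hcol]
  exact (l2norm_add_le _ _).trans
    (add_le_add (l2norm_mulVec_le_sigma2_mul A (sum_deviation v)) (l2norm_deviation_le d))

end Deviation

lemma le_pow_mul_add_div_one_sub_of_le_mul_add {a : ℕ → ℝ} {r L : ℝ} (hr0 : 0 ≤ r)
    (hr1 : r < 1) (hL : 0 ≤ L) (h : ∀ k, a (k + 1) ≤ r * a k + L) (k : ℕ) :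
    a k ≤ r ^ k * a 0 + L / (1 - r) := by
  have hr1' : 0 < 1 - r := sub_pos.2 hr1
  induction k with
  | zero => simpa using div_nonneg hL hr1'.le
  | succ k ih =>
    calc a (k + 1) ≤ r * a k + L := h k
      _ ≤ r * (r ^ k * a 0 + L / (1 - r)) + L := by gcongr
      _ = r ^ (k + 1) * a 0 + L / (1 - r) := by field_simp; ring

theorem perturbed_consensus_bound_general (n : ℕ)
    (A : ℕ → Matrix (Fin n) (Fin n) ℝ)
    (hrow : ∀ k i, ∑ j, A k i j = 1)
    (hcol : ∀ k j, ∑ i, A k i j = 1)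
    (lam : ℝ) (hlam0 : 0 ≤ lam) (hlam1 : lam < 1)
    (hσ : ∀ k, sigma2 (A k) ≤ lam)
    (L' : ℝ)
    (Δ x : ℕ → Fin n → ℝ)
    (hΔ : ∀ k, l2norm (Δ k) ≤ L')
    (hx : ∀ k, x (k + 1) = (A k).mulVec (x k) + Δ k) :
    ∀ k, l2norm (x k - fun _ => (∑ i, x k i) / n)
      ≤ lam ^ k * l2norm (x 0 - fun _ => (∑ i, x 0 i) / n) + L' / (1 - lam) := by
  have hL' : 0 ≤ L' := (l2norm_nonneg _).trans (hΔ 0)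
  refine le_pow_mul_add_div_one_sub_of_le_mul_add (a := fun k => l2norm (deviation (x k)))
    hlam0 hlam1 hL' fun k => ?_
  calc l2norm (deviation (x (k + 1)))
      ≤ sigma2 (A k) * l2norm (deviation (x k)) + l2norm (Δ k) := by
        rw [hx]; exact l2norm_deviation_mulVec_add_le (hrow k) (hcol k) _ _
    _ ≤ lam * l2norm (deviation (x k)) + L' := by
        gcongr
        exacts [l2norm_nonneg _, hσ k, hΔ k]

theorem perturbed_consensus_bound (n : ℕ) (hn : 0 < n)
    (A : ℕ → Matrix (Fin n) (Fin n) ℝ)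
    (hnonneg : ∀ k i j, 0 ≤ A k i j)
    (hrow : ∀ k i, ∑ j, A k i j = 1)
    (hcol : ∀ k j, ∑ i, A k i j = 1)
    (lam : ℝ) (hlam0 : 0 ≤ lam) (hlam1 : lam < 1)
    (hσ : ∀ k, sigma2 (A k) ≤ lam)
    (L' : ℝ)
    (Δ x : ℕ → Fin n → ℝ)
    (hΔ : ∀ k, l2norm (Δ k) ≤ L')
    (hx : ∀ k, x (k + 1) = (A k).mulVec (x k) + Δ k) :
    ∀ k, l2norm (x k - fun _ => (∑ i, x k i) / n)
      ≤ lam ^ k * l2norm (x 0 - fun _ => (∑ i, x 0 i) / n) + L' / (1 - lam) :=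
  perturbed_consensus_bound_general n A hrow hcol lam hlam0 hlam1 hσ L' Δ x hΔ hx
end

section
/- Let h : ℝ → ℝ be convex with a nonempty set U* of minimizers and all subgradients bounded in absolute value by L. Let u^{k+1} = u^k − α g^k where g^k is a subgradient of h at u^k and α = 1/√T for k = 0,…,T−1. Then for any u* ∈ U*, h((1/T)∑_{k=0}^{T−1} u^k) − h(u*) ≤ (|u⁰ − u*|² + L²)/(2√T). -/
/-!
Since `g k` is a subgradient at `u k`, one step of the method decreases the squared distance
to `ustar` by `2α (h (u k) - h ustar)` up to an error `α² L²`. Telescoping bounds the summed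
optimality gaps by `(|u 0 - ustar|² + T α² L²) / (2α)`, and Jensen's inequality bounds the gap at
the average iterate by the average gap. The step size `α = 1 / √T` balances the two terms.
-/

open Finset

theorem ConvexOn.map_sum_div_card_le {ι : Type*} {s : Set ℝ} {f : ℝ → ℝ} (hf : ConvexOn ℝ s f)
    {t : Finset ι} (ht : t.Nonempty) {p : ι → ℝ} (hp : ∀ i ∈ t, p i ∈ s) :
    f ((∑ i ∈ t, p i) / #t) ≤ (∑ i ∈ t, f (p i)) / #t := by
  have hcard : (#t : ℝ) ≠ 0 := by exact_mod_cast ht.card_pos.ne'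
  have := hf.map_sum_le (w := fun _ => (#t : ℝ)⁻¹) (fun _ _ => by positivity)
    (by simp [hcard]) hp
  simp only [smul_eq_mul, inv_mul_eq_div] at this
  rwa [← sum_div, ← sum_div] at this

theorem sum_range_le_of_succ_le_sub {d e : ℕ → ℝ} {c : ℝ} (hd : ∀ k, d (k + 1) ≤ d k + c - e k)
    (n : ℕ) : ∑ k ∈ range n, e k ≤ d 0 - d n + n * c := by
  calc ∑ k ∈ range n, e k ≤ ∑ k ∈ range n, (d k - d (k + 1) + c) :=
        sum_le_sum fun k _ => by linarith [hd k]
    _ = d 0 - d n + n * c := by rw [sum_add_distrib, sum_range_sub']; simp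

theorem sq_sub_subgradient_step_le {h : ℝ → ℝ} {x y g α L : ℝ} (hα : 0 ≤ α)
    (hsub : h x + g * (y - x) ≤ h y) (hg : |g| ≤ L) :
    (x - α * g - y) ^ 2 ≤ (x - y) ^ 2 + α ^ 2 * L ^ 2 - 2 * α * (h x - h y) := by
  have hg2 : g ^ 2 ≤ L ^ 2 := sq_le_sq' (abs_le.mp hg).1 (abs_le.mp hg).2
  have hgap : 2 * α * (h x - h y) ≤ 2 * α * (g * (x - y)) :=
    mul_le_mul_of_nonneg_left (by linarith) (by positivity)
  nlinarith [mul_le_mul_of_nonneg_left hg2 (sq_nonneg α)]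

theorem sum_range_sub_le_of_subgradient_step {h : ℝ → ℝ} {u g : ℕ → ℝ} {y α L : ℝ} (hα : 0 < α)
    (hsub : ∀ k, h (u k) + g k * (y - u k) ≤ h y) (hgL : ∀ k, |g k| ≤ L)
    (hu : ∀ k, u (k + 1) = u k - α * g k) (n : ℕ) :
    ∑ k ∈ range n, (h (u k) - h y) ≤ ((u 0 - y) ^ 2 + n * α ^ 2 * L ^ 2) / (2 * α) := by
  have htel := sum_range_le_of_succ_le_sub (d := fun k => (u k - y) ^ 2)
    (e := fun k => 2 * α * (h (u k) - h y)) (c := α ^ 2 * L ^ 2)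
    (fun k => hu k ▸ sq_sub_subgradient_step_le hα.le (hsub k) (hgL k)) n
  rw [le_div_iff₀ (by positivity), mul_comm, mul_sum]
  nlinarith [sq_nonneg (u n - y)]

theorem ConvexOn.subgradient_method_average_sub_le {h : ℝ → ℝ} (hconv : ConvexOn ℝ Set.univ h)
    {u g : ℕ → ℝ} {y α L : ℝ} (hα : 0 < α)
    (hsub : ∀ k, h (u k) + g k * (y - u k) ≤ h y) (hgL : ∀ k, |g k| ≤ L)
    (hu : ∀ k, u (k + 1) = u k - α * g k) {n : ℕ} (hn : 0 < n) :
    h ((∑ k ∈ range n, u k) / n) - h y ≤ ((u 0 - y) ^ 2 + n * α ^ 2 * L ^ 2) / (2 * α * n) := by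
  have hjensen := hconv.map_sum_div_card_le (nonempty_range_iff.mpr hn.ne') (p := u)
    fun _ _ => Set.mem_univ _
  rw [card_range] at hjensen
  have hgaps := sum_range_sub_le_of_subgradient_step hα hsub hgL hu n
  have hnR : (0 : ℝ) < n := by exact_mod_cast hn
  rw [sum_sub_distrib, sum_const, card_range, nsmul_eq_mul] at hgaps
  calc h ((∑ k ∈ range n, u k) / n) - h y ≤ (∑ k ∈ range n, h (u k)) / n - h y := by linarith
    _ = ((∑ k ∈ range n, h (u k)) - n * h y) / n := by field_simp
    _ ≤ ((u 0 - y) ^ 2 + n * α ^ 2 * L ^ 2) / (2 * α) / n := by gcongr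
    _ = ((u 0 - y) ^ 2 + n * α ^ 2 * L ^ 2) / (2 * α * n) := by rw [div_div]

theorem subgradient_method_constant_stepsize_general
    (h : ℝ → ℝ) (hconv : ConvexOn ℝ Set.univ h)
    (L : ℝ) (ustar : ℝ)
    (T : ℕ) (hT : 0 < T) (u g : ℕ → ℝ)
    (hsub : ∀ k v, h (u k) + g k * (v - u k) ≤ h v)
    (hgL : ∀ k, |g k| ≤ L)
    (hu : ∀ k, u (k + 1) = u k - (1 / Real.sqrt T) * g k) :
    h ((∑ k ∈ Finset.range T, u k) / T) - h ustar
      ≤ (|u 0 - ustar| ^ 2 + L ^ 2) / (2 * Real.sqrt T) := by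
  have hsqrt : 0 < Real.sqrt T := Real.sqrt_pos.mpr (by exact_mod_cast hT)
  have hbound := hconv.subgradient_method_average_sub_le (one_div_pos.mpr hsqrt)
    (fun k => hsub k ustar) hgL hu hT
  convert hbound using 1
  rw [sq_abs]
  field_simp
  rw [Real.sq_sqrt (Nat.cast_nonneg T)]
  ring

theorem subgradient_method_constant_stepsize
    (h : ℝ → ℝ) (hconv : ConvexOn ℝ Set.univ h)
    (L : ℝ) (ustar : ℝ) (hmin : ∀ v, h ustar ≤ h v)
    (T : ℕ) (hT : 0 < T) (u g : ℕ → ℝ)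
    (hsub : ∀ k v, h (u k) + g k * (v - u k) ≤ h v)
    (hgL : ∀ k, |g k| ≤ L)
    (hu : ∀ k, u (k + 1) = u k - (1 / Real.sqrt T) * g k) :
    h ((∑ k ∈ Finset.range T, u k) / T) - h ustar
      ≤ (|u 0 - ustar| ^ 2 + L ^ 2) / (2 * Real.sqrt T) :=
  subgradient_method_constant_stepsize_general h hconv L ustar T hT u g hsub hgL hu
end

section
/- Let h : ℝ → ℝ be convex with nonempty minimizer set U* and subgradients bounded by L, and let u^{k+1} = u^k − α^k g^k with g^k a subgradient of h at u^k, where the nonnegative stepsizes satisfy ∑ α^k = ∞ and ∑ (α^k)² < ∞. Then for any u* ∈ U*, h((∑_{l=0}^k α^l u^l)/(∑_{l=0}^k α^l)) → h(u*) as k → ∞. -/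
/-!
Expanding `‖u - a • g - x‖²` and using the subgradient inequality at `x` gives the one-step
estimate `‖u - a • g - x‖² + 2 a (h u - h x) ≤ ‖u - x‖² + a² L²`. Telescoping bounds the weighted sum
`∑ αₗ (h uₗ - h x)` by `(‖u₀ - x‖² + L² ∑ αₗ²) / 2`, and Jensen's inequality turns this into
`h (ū) - h x ≤ (‖u₀ - x‖² + L² ∑ αₗ²) / (2 ∑ αₗ)` for the weighted average `ū`; the denominator
diverges while the numerator stays bounded.
-/

open Filter Finset Topology

theorem ConvexOn.map_centerMass_sub_le_div {E ι : Type*} [AddCommGroup E] [Module ℝ E]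
    {h : E → ℝ} (hconv : ConvexOn ℝ Set.univ h) {t : Finset ι} {w : ι → ℝ} {p : ι → E}
    (hw : ∀ i ∈ t, 0 ≤ w i) (hpos : 0 < ∑ i ∈ t, w i) (c : ℝ) :
    h (t.centerMass w p) - c ≤ (∑ i ∈ t, w i * (h (p i) - c)) / ∑ i ∈ t, w i := by
  have hjensen := hconv.map_centerMass_le hw hpos fun i _ => Set.mem_univ (p i)
  have hmean : t.centerMass w (h ∘ p) - c = (∑ i ∈ t, w i * (h (p i) - c)) / ∑ i ∈ t, w i := by
    simp only [centerMass, Function.comp, smul_eq_mul, mul_sub, sum_sub_distrib, ← sum_mul]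
    field_simp
  linarith

namespace SubgradientMethod

variable {E : Type*} [NormedAddCommGroup E] [InnerProductSpace ℝ E]

def HasSubgradientAt (h : E → ℝ) (g x : E) : Prop :=
  ∀ v, h x + inner ℝ g (v - x) ≤ h v

theorem norm_sub_sq_add_two_mul_gap_le {h : E → ℝ} {u g : E} {a : ℝ} (ha : 0 ≤ a)
    (hg : HasSubgradientAt h g u) (x : E) :
    ‖u - a • g - x‖ ^ 2 + 2 * a * (h u - h x) ≤ ‖u - x‖ ^ 2 + a ^ 2 * ‖g‖ ^ 2 := by
  have hexpand :
      ‖u - a • g - x‖ ^ 2 = ‖u - x‖ ^ 2 - 2 * a * inner ℝ (u - x) g + a ^ 2 * ‖g‖ ^ 2 := by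
    rw [sub_right_comm, norm_sub_sq_real, inner_smul_right, norm_smul, Real.norm_of_nonneg ha]
    ring
  have hgap : h u - h x ≤ inner ℝ (u - x) g := by
    have := hg x
    rw [← neg_sub u x, inner_neg_right, real_inner_comm] at this
    linarith
  nlinarith [mul_le_mul_of_nonneg_left hgap ha]

variable {h : E → ℝ} {α : ℕ → ℝ} {u g : ℕ → E} {L : ℝ}

theorem norm_sub_sq_add_two_mul_sum_gap_le (hα0 : ∀ k, 0 ≤ α k)
    (hsub : ∀ k, HasSubgradientAt h (g k) (u k)) (hgL : ∀ k, ‖g k‖ ≤ L)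
    (hu : ∀ k, u (k + 1) = u k - α k • g k) (x : E) (n : ℕ) :
    ‖u n - x‖ ^ 2 + 2 * ∑ l ∈ range n, α l * (h (u l) - h x)
      ≤ ‖u 0 - x‖ ^ 2 + L ^ 2 * ∑ l ∈ range n, α l ^ 2 := by
  induction n with
  | zero => simp
  | succ n ih =>
    have hstep := norm_sub_sq_add_two_mul_gap_le (hα0 n) (hsub n) x
    have hgn : ‖g n‖ ^ 2 ≤ L ^ 2 := pow_le_pow_left₀ (norm_nonneg _) (hgL n) 2
    rw [sum_range_succ, sum_range_succ, hu n]
    nlinarith [mul_le_mul_of_nonneg_left hgn (sq_nonneg (α n))]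

theorem two_mul_sum_gap_le (hα0 : ∀ k, 0 ≤ α k) (hsq : Summable fun k => α k ^ 2)
    (hsub : ∀ k, HasSubgradientAt h (g k) (u k)) (hgL : ∀ k, ‖g k‖ ≤ L)
    (hu : ∀ k, u (k + 1) = u k - α k • g k) (x : E) (n : ℕ) :
    2 * ∑ l ∈ range n, α l * (h (u l) - h x) ≤ ‖u 0 - x‖ ^ 2 + L ^ 2 * ∑' k, α k ^ 2 := by
  have htail : ∑ l ∈ range n, α l ^ 2 ≤ ∑' k, α k ^ 2 :=
    hsq.sum_le_tsum _ fun k _ => sq_nonneg (α k)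
  nlinarith [norm_sub_sq_add_two_mul_sum_gap_le hα0 hsub hgL hu x n,
    mul_le_mul_of_nonneg_left htail (sq_nonneg L), sq_nonneg ‖u n - x‖]

theorem map_centerMass_sub_le (hconv : ConvexOn ℝ Set.univ h) (hα0 : ∀ k, 0 ≤ α k)
    (hsq : Summable fun k => α k ^ 2)
    (hsub : ∀ k, HasSubgradientAt h (g k) (u k)) (hgL : ∀ k, ‖g k‖ ≤ L)
    (hu : ∀ k, u (k + 1) = u k - α k • g k) (x : E) {n : ℕ}
    (hpos : 0 < ∑ l ∈ range n, α l) :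
    h ((range n).centerMass α u) - h x
      ≤ (‖u 0 - x‖ ^ 2 + L ^ 2 * ∑' k, α k ^ 2) / (2 * ∑ l ∈ range n, α l) := by
  calc h ((range n).centerMass α u) - h x
      ≤ (∑ l ∈ range n, α l * (h (u l) - h x)) / ∑ l ∈ range n, α l :=
        hconv.map_centerMass_sub_le_div (fun l _ => hα0 l) hpos (h x)
    _ ≤ (‖u 0 - x‖ ^ 2 + L ^ 2 * ∑' k, α k ^ 2) / 2 / ∑ l ∈ range n, α l := by
        gcongr
        linarith [two_mul_sum_gap_le hα0 hsq hsub hgL hu x n]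
    _ = _ := div_div _ _ _

theorem tendsto_map_centerMass (hconv : ConvexOn ℝ Set.univ h) {x : E} (hmin : ∀ v, h x ≤ h v)
    (hα0 : ∀ k, 0 ≤ α k) (hdiv : Tendsto (fun n => ∑ l ∈ range n, α l) atTop atTop)
    (hsq : Summable fun k => α k ^ 2)
    (hsub : ∀ k, HasSubgradientAt h (g k) (u k)) (hgL : ∀ k, ‖g k‖ ≤ L)
    (hu : ∀ k, u (k + 1) = u k - α k • g k) :
    Tendsto (fun n => h ((range n).centerMass α u)) atTop (𝓝 (h x)) := by
  set D := ‖u 0 - x‖ ^ 2 + L ^ 2 * ∑' k, α k ^ 2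
  have hbound : Tendsto (fun n => h x + D / (2 * ∑ l ∈ range n, α l)) atTop (𝓝 (h x)) := by
    simpa using tendsto_const_nhds.add
      (tendsto_const_nhds.div_atTop (hdiv.const_mul_atTop two_pos))
  refine tendsto_of_tendsto_of_tendsto_of_le_of_le' tendsto_const_nhds hbound
    (Eventually.of_forall fun n => hmin _) ?_
  filter_upwards [hdiv.eventually_gt_atTop 0] with n hpos
  linarith [map_centerMass_sub_le hconv hα0 hsq hsub hgL hu x hpos]

end SubgradientMethod

theorem subgradient_method_diminishing_stepsize
    (h : ℝ → ℝ) (hconv : ConvexOn ℝ Set.univ h)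
    (L : ℝ) (ustar : ℝ) (hmin : ∀ v, h ustar ≤ h v)
    (α : ℕ → ℝ) (hα0 : ∀ k, 0 ≤ α k)
    (hdiv : Tendsto (fun k => ∑ l ∈ Finset.range (k + 1), α l) atTop atTop)
    (hsq : Summable fun k => (α k) ^ 2)
    (u g : ℕ → ℝ)
    (hsub : ∀ k v, h (u k) + g k * (v - u k) ≤ h v)
    (hgL : ∀ k, |g k| ≤ L)
    (hu : ∀ k, u (k + 1) = u k - α k * g k) :
    Tendsto (fun k =>
        h ((∑ l ∈ Finset.range (k + 1), α l * u l) / (∑ l ∈ Finset.range (k + 1), α l)))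
      atTop (nhds (h ustar)) := by
  have hlim := SubgradientMethod.tendsto_map_centerMass hconv hmin hα0
    ((tendsto_add_atTop_iff_nat 1).1 hdiv) hsq
    (fun k v => by rw [Real.inner_apply]; exact hsub k v) (by simpa using hgL) (by simpa using hu)
  simpa [Finset.centerMass, div_eq_inv_mul] using (tendsto_add_atTop_iff_nat 1).2 hlim
end

section
/- Let y^{k+1} = Aᵏ y^k with y⁰ = 𝟏, where each Aᵏ is an n×n column-stochastic matrix whose positive entries are at least 1/n and whose diagonal entries are all positive, and suppose every product of n consecutive matrices A^{(l+1)n−1}⋯A^{ln} has all entries at least (1/n)^n. Then y_i^k ≥ (1/n)^{2n} for all i and all k. -/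
/-!
Column-stochastic matrices preserve nonnegativity and the total mass `∑ i, y k i = n` of the
trajectory. Since the diagonal entries are at least `1/n`, one step shrinks each coordinate by at
most a factor `1/n`. At the times `l * n` every coordinate is at least `(1/n)^n`: for `l = 0`
because `y 0 = 1`, and otherwise because the preceding block product has all entries at least
`(1/n)^n` and acts on a vector of mass `n ≥ 1`. At most `n - 1` further steps lose another factor
`(1/n)^(n-1)`.
-/

open Finset

namespace Matrix

variable {ι R : Type*} [Fintype ι] [Semiring R] [PartialOrder R] [IsOrderedRing R]

theorem mul_le_mulVec_apply {M : Matrix ι ι R} {x : ι → R} (hM : ∀ i j, 0 ≤ M i j)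
    (hx : ∀ j, 0 ≤ x j) (i j : ι) : M i j * x j ≤ (M *ᵥ x) i :=
  single_le_sum (f := fun j => M i j * x j) (fun j _ => mul_nonneg (hM i j) (hx j)) (mem_univ j)

theorem mul_sum_le_mulVec_apply {M : Matrix ι ι R} {x : ι → R} {c : R} {i : ι}
    (hc : ∀ j, c ≤ M i j) (hx : ∀ j, 0 ≤ x j) : c * ∑ j, x j ≤ (M *ᵥ x) i := by
  rw [mul_sum]
  exact sum_le_sum fun j _ => mul_le_mul_of_nonneg_right (hc j) (hx j)

end Matrix

open Matrix

theorem blockProd_mulVec {n : ℕ} {A : ℕ → Matrix (Fin n) (Fin n) ℝ} {y : ℕ → Fin n → ℝ}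
    (hy : ∀ k, y (k + 1) = A k *ᵥ y k) (s m : ℕ) : blockProd A s m *ᵥ y s = y (s + m) := by
  induction m with
  | zero => simp [blockProd, matProd]
  | succ m ih =>
    change (A (s + m) * blockProd A s m) *ᵥ y s = y (s + m + 1)
    rw [← mulVec_mulVec, ih, hy]

section Trajectory

variable {ι R : Type*} [Fintype ι] [DecidableEq ι] [Semiring R] [PartialOrder R]
  [IsOrderedRing R] {A : ℕ → Matrix ι ι R} {y : ℕ → ι → R}

theorem trajectory_nonneg (hA : ∀ k, A k ∈ colStochastic R ι) (hy : ∀ k, y (k + 1) = A k *ᵥ y k)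
    (hy0 : ∀ i, 0 ≤ y 0 i) (k : ℕ) : ∀ i, 0 ≤ y k i := by
  induction k with
  | zero => exact hy0
  | succ k ih => rw [hy]; exact nonneg_mulVec_of_mem_colStochastic (hA k) ih

theorem sum_trajectory (hA : ∀ k, A k ∈ colStochastic R ι) (hy : ∀ k, y (k + 1) = A k *ᵥ y k)
    (k : ℕ) : ∑ i, y k i = ∑ i, y 0 i := by
  induction k with
  | zero => rfl
  | succ k ih => rw [hy, sum_mulVec_of_mem_colStochastic (hA k), ih]

theorem pow_mul_le_trajectory (hA : ∀ k, A k ∈ colStochastic R ι)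
    (hy : ∀ k, y (k + 1) = A k *ᵥ y k) (hy0 : ∀ i, 0 ≤ y 0 i) {c : R} (hc : 0 ≤ c)
    (hdiag : ∀ k i, c ≤ A k i i) (s r : ℕ) (i : ι) : c ^ r * y s i ≤ y (s + r) i := by
  have hnonneg := trajectory_nonneg hA hy hy0
  induction r with
  | zero => simp
  | succ r ih =>
    calc c ^ (r + 1) * y s i = c * (c ^ r * y s i) := by rw [pow_succ', mul_assoc]
      _ ≤ A (s + r) i i * y (s + r) i :=
        mul_le_mul (hdiag _ i) ih (mul_nonneg (pow_nonneg hc r) (hnonneg s i))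
          (nonneg_of_mem_colStochastic (hA _))
      _ ≤ y (s + (r + 1)) i := by
        rw [← add_assoc, hy]
        exact mul_le_mulVec_apply (hA (s + r)).1 (hnonneg _) i i

end Trajectory

theorem push_sum_weights_lower_bound_general (n : ℕ)
    (A : ℕ → Matrix (Fin n) (Fin n) ℝ)
    (hnonneg : ∀ k i j, 0 ≤ A k i j)
    (hcol : ∀ k j, ∑ i, A k i j = 1)
    (hdiag : ∀ k i, 0 < A k i i)
    (hpos : ∀ k i j, 0 < A k i j → (1 : ℝ) / n ≤ A k i j)
    (hblock : ∀ l i j, ((1 : ℝ) / n) ^ n ≤ blockProd A (l * n) n i j)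
    (y : ℕ → Fin n → ℝ)
    (hy0 : y 0 = fun _ => 1)
    (hy : ∀ k, y (k + 1) = (A k).mulVec (y k)) :
    ∀ k i, ((1 : ℝ) / n) ^ (2 * n) ≤ y k i := by
  intro k i
  have hn : (1 : ℝ) ≤ n := mod_cast i.pos
  have hc : (0 : ℝ) ≤ 1 / n := by positivity
  have hc1 : (1 : ℝ) / n ≤ 1 := (div_le_one (by positivity)).2 hn
  have hA k : A k ∈ colStochastic ℝ (Fin n) := mem_colStochastic_iff_sum.2 ⟨hnonneg k, hcol k⟩
  have hy0' : ∀ i, 0 ≤ y 0 i := by simp [hy0]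
  have hcheckpoint : ∀ q j, ((1 : ℝ) / n) ^ n ≤ y (n * q) j := by
    rintro (_ | l) j
    · simpa [hy0] using pow_le_one₀ hc hc1
    · have hmass : ∑ j, y (l * n) j = n := by simp [sum_trajectory hA hy, hy0]
      calc ((1 : ℝ) / n) ^ n ≤ ((1 : ℝ) / n) ^ n * ∑ j, y (l * n) j := by
            rw [hmass]; exact le_mul_of_one_le_right (pow_nonneg hc n) hn
        _ ≤ y (n * (l + 1)) j := by
          rw [show n * (l + 1) = l * n + n by ring, ← blockProd_mulVec hy]
          exact mul_sum_le_mulVec_apply (hblock l j) (trajectory_nonneg hA hy hy0' _)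
  calc ((1 : ℝ) / n) ^ (2 * n) ≤ ((1 : ℝ) / n) ^ (k % n) * ((1 : ℝ) / n) ^ n := by
        rw [← pow_add]; exact pow_le_pow_of_le_one hc hc1 (by have := k.mod_lt i.pos; omega)
    _ ≤ ((1 : ℝ) / n) ^ (k % n) * y (n * (k / n)) i :=
        mul_le_mul_of_nonneg_left (hcheckpoint _ i) (pow_nonneg hc _)
    _ ≤ y k i := by
        simpa [Nat.div_add_mod] using pow_mul_le_trajectory hA hy hy0' hc
          (fun k i => hpos k i i (hdiag k i)) (n * (k / n)) (k % n) i

theorem push_sum_weights_lower_bound (n : ℕ) (hn : 0 < n)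
    (A : ℕ → Matrix (Fin n) (Fin n) ℝ)
    (hnonneg : ∀ k i j, 0 ≤ A k i j)
    (hcol : ∀ k j, ∑ i, A k i j = 1)
    (hdiag : ∀ k i, 0 < A k i i)
    (hpos : ∀ k i j, 0 < A k i j → (1 : ℝ) / n ≤ A k i j)
    (hblock : ∀ l i j, ((1 : ℝ) / n) ^ n ≤ blockProd A (l * n) n i j)
    (y : ℕ → Fin n → ℝ)
    (hy0 : y 0 = fun _ => 1)
    (hy : ∀ k, y (k + 1) = (A k).mulVec (y k)) :
    ∀ k i, ((1 : ℝ) / n) ^ (2 * n) ≤ y k i :=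
  push_sum_weights_lower_bound_general n A hnonneg hcol hdiag hpos hblock y hy0 hy
end
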